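/- arXiv:2204.07306 — 3 statements merged into one kernel-verified Lean document; each statement's English description precedes it below -/
import Mathlib

section
/- Consider the two-block convex problem min over x ∈ ℝ^n, z ∈ ℝ^m of f(x) + g(z) subject to A x + B z = b, where f : ℝ^n → ℝ and g : ℝ^m → ℝ are convex, A ∈ ℝ^{p×n}, B ∈ ℝ^{p×m}, b ∈ ℝ^p, and let ρ > 0. Suppose sequences (x_k)_{k≥1}, (z_k)_{k≥1}, (λ_k)_{k≥1} satisfy the ADMM updates: x_{k+1} is a global minimizer over x of f(x) + ⟨λ_k, A x + B z_k − b⟩ + (ρ/2)‖A x + B z_k − b‖²; z_{k+1} is a global minimizer over z of g(z) + ⟨λ_k, A x_{k+1} + B z − b⟩ + (ρ/2)‖A x_{k+1} + B z − b‖²; and λ_{k+1} = λ_k + ρ(A x_{k+1} + B z_{k+1} − b). Then for every K ≥ 1, every pair (x, z) with A x + B z = b, and every λ ∈ ℝ^p, the ergodic averages x̄_K = (1/K)∑_{k=2}^{K+1} x_k and z̄_K = (1/K)∑_{k=2}^{K+1} z_k satisfy f(x̄_K) + g(z̄_K) − f(x) − g(z) + ⟨λ, A x̄_K + B z̄_K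 − b⟩ ≤ (1/K)·[(ρ/2)‖B z − B z_1‖² + (1/(2ρ))‖λ − λ_1‖²]. In particular, ADMM finds an ε-optimal solution in O(1/ε) iterations. -/
/-!
Writing the optimality of each ADMM subproblem as a variational inequality and using
`λ_{k+1} - λ_k = ρ r_{k+1}` with `r_{k+1} = A x_{k+1} + B z_{k+1} - b`, the Lagrangian gap
of `(x_{k+1}, z_{k+1})` against a feasible `(x, z)` and a dual vector `λ` is at most the
decrease of the energy `(ρ/2)‖B z - B z_k‖² + (1/(2ρ))‖λ - λ_k‖²`, the slack being the square
`(ρ/2)‖r_{k+1} + B (z_k - z_{k+1})‖²`. Summing telescopes, and Jensen's inequality for the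
Lagrangian, which is convex in `(x, z)`, passes the bound to the ergodic averages.
-/

open Matrix Finset Filter Topology

lemma nonneg_of_forall_mem_Ioc_nonneg_add_mul {a C : ℝ}
    (h : ∀ t ∈ Set.Ioc (0 : ℝ) 1, 0 ≤ a + t * C) : 0 ≤ a := by
  have hlim : Tendsto (fun t : ℝ => a + t * C) (𝓝[>] 0) (𝓝 a) :=
    (Continuous.tendsto' (by fun_prop) 0 a (by simp)).mono_left nhdsWithin_le_nhds
  exact ge_of_tendsto hlim <| mem_of_superset (Ioc_mem_nhdsGT one_pos) h

lemma sum_Icc_two_eq_sum_range {M : Type*} [AddCommMonoid M] (v : ℕ → M) (K : ℕ) :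
    ∑ k ∈ Icc 2 (K + 1), v k = ∑ k ∈ range K, v (k + 2) := by
  rw [range_eq_Ico, sum_Ico_add', zero_add, ← Ico_add_one_right_eq_Icc]
  rfl

theorem ConvexOn.map_average_le_of_descent {E : Type*} [AddCommGroup E] [Module ℝ E]
    {φ : E → ℝ} (hφ : ConvexOn ℝ Set.univ φ) {K : ℕ} (hK : 0 < K) (y : ℕ → E) (c : ℝ)
    {V : ℕ → ℝ} (hV : 0 ≤ V K) (hdesc : ∀ k < K, φ (y k) ≤ c + (V k - V (k + 1))) :
    φ ((1 / K : ℝ) • ∑ k ∈ range K, y k) ≤ c + 1 / K * V 0 := by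
  have hK' : (0 : ℝ) < K := by exact_mod_cast hK
  have hweights : ∑ _k ∈ range K, (1 / K : ℝ) = 1 := by simp [hK'.ne']
  calc φ ((1 / K : ℝ) • ∑ k ∈ range K, y k)
      ≤ ∑ k ∈ range K, 1 / K * φ (y k) := by
        rw [smul_sum]
        exact hφ.map_sum_le (fun _ _ => by positivity) hweights fun _ _ => Set.mem_univ _
    _ ≤ ∑ k ∈ range K, 1 / K * (c + (V k - V (k + 1))) :=
        sum_le_sum fun k hk => mul_le_mul_of_nonneg_left (hdesc k (mem_range.1 hk)) (by positivity)
    _ = c + 1 / K * (V 0 - V K) := by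
        rw [← mul_sum, sum_add_distrib, sum_range_sub', sum_const, card_range, nsmul_eq_mul]
        field_simp
    _ ≤ c + 1 / K * V 0 := by gcongr; linarith

variable {ι : Type*} [Fintype ι]

lemma dotProduct_self_nonneg (v : ι → ℝ) : 0 ≤ v ⬝ᵥ v :=
  Fintype.sum_nonneg fun _ => mul_self_nonneg _

lemma dotProduct_add_smul_self (r d : ι → ℝ) (t : ℝ) :
    (r + t • d) ⬝ᵥ (r + t • d) = r ⬝ᵥ r + 2 * t * (r ⬝ᵥ d) + t ^ 2 * (d ⬝ᵥ d) := by
  simp only [add_dotProduct, dotProduct_add, smul_dotProduct, dotProduct_smul, smul_eq_mul,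
    dotProduct_comm d r]
  ring

theorem ConvexOn.add_dotProduct_le_of_minimizes_penalized {E : Type*} [AddCommGroup E]
    [Module ℝ E] {f : E → ℝ} (hf : ConvexOn ℝ Set.univ f) {r : E → ι → ℝ} {u : ι → ℝ} {ρ : ℝ}
    {x₀ x : E}
    (hmin : ∀ y, f x₀ + u ⬝ᵥ r x₀ + ρ / 2 * (r x₀ ⬝ᵥ r x₀) ≤ f y + u ⬝ᵥ r y + ρ / 2 * (r y ⬝ᵥ r y))
    (hr : ∀ t : ℝ, r ((1 - t) • x₀ + t • x) = r x₀ + t • (r x - r x₀)) :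
    f x₀ + (u + ρ • r x₀) ⬝ᵥ r x₀ ≤ f x + (u + ρ • r x₀) ⬝ᵥ r x := by
  set d := r x - r x₀
  suffices 0 ≤ f x - f x₀ + (u + ρ • r x₀) ⬝ᵥ d by
    simp only [d, dotProduct_sub] at this; linarith
  refine nonneg_of_forall_mem_Ioc_nonneg_add_mul (C := ρ / 2 * (d ⬝ᵥ d)) fun t ⟨ht0, ht1⟩ => ?_
  have hconv : f ((1 - t) • x₀ + t • x) ≤ (1 - t) * f x₀ + t * f x :=
    hf.2 (Set.mem_univ _) (Set.mem_univ _) (by linarith) ht0.le (by ring)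
  have hstep := hmin ((1 - t) • x₀ + t • x)
  rw [hr, dotProduct_add_smul_self, dotProduct_add, dotProduct_smul, smul_eq_mul] at hstep
  have hlin : (u + ρ • r x₀) ⬝ᵥ d = u ⬝ᵥ d + ρ * (r x₀ ⬝ᵥ d) := by
    rw [add_dotProduct, smul_dotProduct, smul_eq_mul]
  have hscaled :
      t * 0 ≤ t * (f x - f x₀ + (u ⬝ᵥ d + ρ * (r x₀ ⬝ᵥ d)) + t * (ρ / 2 * (d ⬝ᵥ d))) := by
    linarith
  rw [hlin]
  exact le_of_mul_le_mul_left hscaled ht0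

/-- Evaluated at `w = B z_k`, `lam = λ_k` against the reference point `(w₀, μ) = (B z, λ)`. -/
noncomputable def admmEnergy (ρ : ℝ) (w₀ μ w lam : ι → ℝ) : ℝ :=
  ρ / 2 * ((w₀ - w) ⬝ᵥ (w₀ - w)) + 1 / (2 * ρ) * ((μ - lam) ⬝ᵥ (μ - lam))

lemma admmEnergy_nonneg {ρ : ℝ} (hρ : 0 ≤ ρ) (w₀ μ w lam : ι → ℝ) :
    0 ≤ admmEnergy ρ w₀ μ w lam := by
  have := dotProduct_self_nonneg (w₀ - w)
  have := dotProduct_self_nonneg (μ - lam)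
  unfold admmEnergy
  positivity

lemma admmEnergy_sub_eq {ρ : ℝ} (hρ : ρ ≠ 0) {a a₀ w w₁ w₀ b lam μ : ι → ℝ}
    (hfeas : a₀ + w₀ = b) :
    admmEnergy ρ w₀ μ w lam - admmEnergy ρ w₀ μ w₁ (lam + ρ • (a + w₁ - b))
    = (lam + ρ • (a + w - b)) ⬝ᵥ (a₀ + w - b) - (lam + ρ • (a + w - b)) ⬝ᵥ (a + w - b)
      + ((lam + ρ • (a + w₁ - b)) ⬝ᵥ (a + w₀ - b) - (lam + ρ • (a + w₁ - b)) ⬝ᵥ (a + w₁ - b))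
      + μ ⬝ᵥ (a + w₁ - b)
      + ρ / 2 * ((a + w₁ - b + (w - w₁)) ⬝ᵥ (a + w₁ - b + (w - w₁))) := by
  subst hfeas
  simp only [admmEnergy, dotProduct_add, dotProduct_sub, dotProduct_smul, smul_eq_mul,
    dotProduct_comm]
  field_simp
  ring

variable {σ τ : Type*} [Fintype σ] [Fintype τ]

lemma convexOn_dotProduct_mulVec_add_mulVec_sub (μ : ι → ℝ) (A : Matrix ι σ ℝ)
    (B : Matrix ι τ ℝ) (b : ι → ℝ) :
    ConvexOn ℝ Set.univ fun w : (σ → ℝ) × (τ → ℝ) => μ ⬝ᵥ (A *ᵥ w.1 + B *ᵥ w.2 - b) := by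
  refine ⟨convex_univ, fun w _ w' _ s t _ _ hst => le_of_eq ?_⟩
  simp only [Prod.fst_add, Prod.snd_add, Prod.smul_fst, Prod.smul_snd, mulVec_add, mulVec_smul,
    dotProduct_add, dotProduct_sub, dotProduct_smul, smul_eq_mul]
  linear_combination (μ ⬝ᵥ b) * hst

lemma convexOn_lagrangian {f : (σ → ℝ) → ℝ} {g : (τ → ℝ) → ℝ} (hf : ConvexOn ℝ Set.univ f)
    (hg : ConvexOn ℝ Set.univ g) (μ : ι → ℝ) (A : Matrix ι σ ℝ) (B : Matrix ι τ ℝ)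
    (b : ι → ℝ) :
    ConvexOn ℝ Set.univ fun w : (σ → ℝ) × (τ → ℝ) =>
      f w.1 + g w.2 + μ ⬝ᵥ (A *ᵥ w.1 + B *ᵥ w.2 - b) :=
  ((hf.comp_linearMap (LinearMap.fst ℝ _ _)).add (hg.comp_linearMap (LinearMap.snd ℝ _ _))).add
    (convexOn_dotProduct_mulVec_add_mulVec_sub μ A B b)

theorem admm_step_descent {f : (σ → ℝ) → ℝ} {g : (τ → ℝ) → ℝ} (hf : ConvexOn ℝ Set.univ f)
    (hg : ConvexOn ℝ Set.univ g) {A : Matrix ι σ ℝ} {B : Matrix ι τ ℝ} {b : ι → ℝ} {ρ : ℝ}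
    (hρ : 0 < ρ) {x₁ : σ → ℝ} {z₀ z₁ : τ → ℝ} {lam₀ lam₁ : ι → ℝ}
    (hx : ∀ x' : σ → ℝ,
      f x₁ + lam₀ ⬝ᵥ (A *ᵥ x₁ + B *ᵥ z₀ - b)
        + ρ / 2 * ((A *ᵥ x₁ + B *ᵥ z₀ - b) ⬝ᵥ (A *ᵥ x₁ + B *ᵥ z₀ - b))
      ≤ f x' + lam₀ ⬝ᵥ (A *ᵥ x' + B *ᵥ z₀ - b)
        + ρ / 2 * ((A *ᵥ x' + B *ᵥ z₀ - b) ⬝ᵥ (A *ᵥ x' + B *ᵥ z₀ - b)))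
    (hz : ∀ z' : τ → ℝ,
      g z₁ + lam₀ ⬝ᵥ (A *ᵥ x₁ + B *ᵥ z₁ - b)
        + ρ / 2 * ((A *ᵥ x₁ + B *ᵥ z₁ - b) ⬝ᵥ (A *ᵥ x₁ + B *ᵥ z₁ - b))
      ≤ g z' + lam₀ ⬝ᵥ (A *ᵥ x₁ + B *ᵥ z' - b)
        + ρ / 2 * ((A *ᵥ x₁ + B *ᵥ z' - b) ⬝ᵥ (A *ᵥ x₁ + B *ᵥ z' - b)))
    (hlam : lam₁ = lam₀ + ρ • (A *ᵥ x₁ + B *ᵥ z₁ - b))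
    {xs : σ → ℝ} {zs : τ → ℝ} (hfeas : A *ᵥ xs + B *ᵥ zs = b) (μ : ι → ℝ) :
    f x₁ + g z₁ + μ ⬝ᵥ (A *ᵥ x₁ + B *ᵥ z₁ - b)
      ≤ f xs + g zs + (admmEnergy ρ (B *ᵥ zs) μ (B *ᵥ z₀) lam₀
        - admmEnergy ρ (B *ᵥ zs) μ (B *ᵥ z₁) lam₁) := by
  have hvx := hf.add_dotProduct_le_of_minimizes_penalized
    (r := fun x' => A *ᵥ x' + B *ᵥ z₀ - b) hx (x := xs) fun t => by
      simp only [mulVec_add, mulVec_smul]; module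
  have hvz := hg.add_dotProduct_le_of_minimizes_penalized
    (r := fun z' => A *ᵥ x₁ + B *ᵥ z' - b) hz (x := zs) fun t => by
      simp only [mulVec_add, mulVec_smul]; module
  have hslack : 0 ≤ ρ / 2 * ((A *ᵥ x₁ + B *ᵥ z₁ - b + (B *ᵥ z₀ - B *ᵥ z₁))
      ⬝ᵥ (A *ᵥ x₁ + B *ᵥ z₁ - b + (B *ᵥ z₀ - B *ᵥ z₁))) :=
    mul_nonneg (by positivity) (dotProduct_self_nonneg _)
  subst hlam
  rw [admmEnergy_sub_eq hρ.ne' hfeas]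
  linarith

/-- Ergodic `O(1/ε)` convergence of two-block ADMM for
`min f(x) + g(z)` subject to `A x + B z = b`, with `f, g` convex and penalty `ρ > 0`.
For any sequences satisfying the ADMM updates, every `K ≥ 1`, every feasible pair `(x, z)`
and every dual vector `λ`, the ergodic averages
`x̄_K = (1/K)∑_{k=2}^{K+1} x_k`, `z̄_K = (1/K)∑_{k=2}^{K+1} z_k` satisfy
`f(x̄_K) + g(z̄_K) − f(x) − g(z) + ⟨λ, A x̄_K + B z̄_K − b⟩
  ≤ (1/K)[(ρ/2)‖B z − B z₁‖² + (1/(2ρ))‖λ − λ₁‖²]`;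
in particular ADMM finds an ε-optimal solution in O(1/ε) iterations. -/
theorem admm_ergodic_O_one_over_eps
    (n m p : ℕ)
    (f : (Fin n → ℝ) → ℝ) (g : (Fin m → ℝ) → ℝ)
    (hf : ConvexOn ℝ Set.univ f) (hg : ConvexOn ℝ Set.univ g)
    (A : Matrix (Fin p) (Fin n) ℝ) (B : Matrix (Fin p) (Fin m) ℝ) (b : Fin p → ℝ)
    (ρ : ℝ) (hρ : 0 < ρ)
    (x : ℕ → Fin n → ℝ) (z : ℕ → Fin m → ℝ) (lam : ℕ → Fin p → ℝ)
    (hx : ∀ k, 1 ≤ k → ∀ x' : Fin n → ℝ,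
      f (x (k + 1)) + lam k ⬝ᵥ (A *ᵥ x (k + 1) + B *ᵥ z k - b)
        + (ρ / 2) * ((A *ᵥ x (k + 1) + B *ᵥ z k - b) ⬝ᵥ (A *ᵥ x (k + 1) + B *ᵥ z k - b))
      ≤ f x' + lam k ⬝ᵥ (A *ᵥ x' + B *ᵥ z k - b)
        + (ρ / 2) * ((A *ᵥ x' + B *ᵥ z k - b) ⬝ᵥ (A *ᵥ x' + B *ᵥ z k - b)))
    (hz : ∀ k, 1 ≤ k → ∀ z' : Fin m → ℝ,
      g (z (k + 1)) + lam k ⬝ᵥ (A *ᵥ x (k + 1) + B *ᵥ z (k + 1) - b)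
        + (ρ / 2) * ((A *ᵥ x (k + 1) + B *ᵥ z (k + 1) - b) ⬝ᵥ (A *ᵥ x (k + 1) + B *ᵥ z (k + 1) - b))
      ≤ g z' + lam k ⬝ᵥ (A *ᵥ x (k + 1) + B *ᵥ z' - b)
        + (ρ / 2) * ((A *ᵥ x (k + 1) + B *ᵥ z' - b) ⬝ᵥ (A *ᵥ x (k + 1) + B *ᵥ z' - b)))
    (hlam : ∀ k, 1 ≤ k →
      lam (k + 1) = lam k + ρ • (A *ᵥ x (k + 1) + B *ᵥ z (k + 1) - b))
    (K : ℕ) (hK : 1 ≤ K)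
    (xs : Fin n → ℝ) (zs : Fin m → ℝ) (hfeas : A *ᵥ xs + B *ᵥ zs = b)
    (lam' : Fin p → ℝ) :
    f ((1 / (K : ℝ)) • ∑ k ∈ Finset.Icc 2 (K + 1), x k)
      + g ((1 / (K : ℝ)) • ∑ k ∈ Finset.Icc 2 (K + 1), z k)
      - f xs - g zs
      + lam' ⬝ᵥ (A *ᵥ ((1 / (K : ℝ)) • ∑ k ∈ Finset.Icc 2 (K + 1), x k)
          + B *ᵥ ((1 / (K : ℝ)) • ∑ k ∈ Finset.Icc 2 (K + 1), z k) - b)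
    ≤ (1 / (K : ℝ)) *
        ((ρ / 2) * ((B *ᵥ zs - B *ᵥ z 1) ⬝ᵥ (B *ᵥ zs - B *ᵥ z 1))
          + (1 / (2 * ρ)) * ((lam' - lam 1) ⬝ᵥ (lam' - lam 1))) := by
  set V : ℕ → ℝ := fun k => admmEnergy ρ (B *ᵥ zs) lam' (B *ᵥ z (k + 1)) (lam (k + 1))
  have hdesc : ∀ k < K,
      f (x (k + 2)) + g (z (k + 2)) + lam' ⬝ᵥ (A *ᵥ x (k + 2) + B *ᵥ z (k + 2) - b)
        ≤ f xs + g zs + (V k - V (k + 1)) := fun k _ =>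
    admm_step_descent hf hg hρ (hx (k + 1) (by omega)) (hz (k + 1) (by omega))
      (hlam (k + 1) (by omega)) hfeas lam'
  have hergodic := (convexOn_lagrangian hf hg lam' A B b).map_average_le_of_descent hK
    (fun k => (x (k + 2), z (k + 2))) (f xs + g zs) (admmEnergy_nonneg hρ.le _ _ _ _) hdesc
  simp only [Prod.smul_fst, Prod.smul_snd, Prod.fst_sum, Prod.snd_sum] at hergodic
  rw [sum_Icc_two_eq_sum_range, sum_Icc_two_eq_sum_range]
  show _ ≤ 1 / (K : ℝ) * V 0
  linarith
end

section
/- Let ρ > 0, let M, N be finite index sets, and let λ₂ ∈ ℝ^{N}, Λ₇ ∈ ℝ^{M×N}, S ∈ ℝ^{M×N}. Define ψ : ℝ^{M×N} → ℝ by ψ(W) = ⟨λ₂, Wᵀ𝟏 − 𝟏⟩ + ⟨Λ₇, W − S⟩_F + (ρ/2)‖Wᵀ𝟏 − 𝟏‖² + (ρ/2)‖W − S‖²_F, where 𝟏 denotes the all-ones vector, ⟨·,·⟩_F the Frobenius (entrywise) inner product, and ‖·‖_F the Frobenius norm. Then the matrix I + 𝟏𝟏ᵀ ∈ ℝ^{M×M}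 is positive definite (hence invertible), ψ is strictly convex, and its unique global minimizer is W* = (1/ρ)(I + 𝟏𝟏ᵀ)⁻¹(ρ𝟏𝟏ᵀ + ρS − Λ₇ − 𝟏λ₂ᵀ). -/
/-!
With `A = I + 𝟏𝟏ᵀ` and `B = ρ𝟏𝟏ᵀ + ρS − Λ₇ − 𝟏λ₂ᵀ`, the objective is an exact quadratic:
`ψ(X + D) = ψ(X) + ⟨ρAX − B, D⟩_F + (ρ/2)⟨D, AD⟩_F`.
Since `A` is positive definite, `D ↦ ⟨D, AD⟩_F = ∑ₙ Dₙᵀ A Dₙ` (sum over the columns of `D`) is a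
positive definite quadratic form, and at `W* = (1/ρ)A⁻¹B` the linear term vanishes, so
`ψ(W) = ψ(W*) + (ρ/2)⟨W − W*, A(W − W*)⟩_F`. Minimality and uniqueness are immediate, and strict
convexity follows from `Q(ax + by) + ab Q(x − y) = a Q(x) + b Q(y)` for a quadratic form `Q` and
`a + b = 1`.
-/

open Matrix

namespace QuadraticMap

variable {E : Type*} [AddCommGroup E] [Module ℝ E]

theorem map_smul_add_smul (Q : QuadraticMap ℝ E ℝ) (a b : ℝ) (x y : E) :
    Q (a • x + b • y) = a ^ 2 * Q x + b ^ 2 * Q y + a * b * polar Q x y := by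
  have h : polar Q (a • x) (b • y) = a * b * polar Q x y := by
    rw [polar_smul_left, polar_smul_right, smul_eq_mul, smul_eq_mul]
    ring
  rw [polar, Q.map_smul, Q.map_smul, smul_eq_mul, smul_eq_mul] at h
  linear_combination h

theorem map_smul_add_smul_add_mul_map_sub (Q : QuadraticMap ℝ E ℝ) {a b : ℝ} (hab : a + b = 1)
    (x y : E) : Q (a • x + b • y) + a * b * Q (x - y) = a * Q x + b * Q y := by
  have hsub : Q (x - y) = Q x + Q y - polar Q x y := by
    simpa [sub_eq_add_neg] using Q.map_smul_add_smul 1 (-1) x y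
  rw [Q.map_smul_add_smul, hsub]
  linear_combination (a * Q x + b * Q y) * hab

theorem PosDef.strictConvexOn_of_forall_eq_add {Q : QuadraticMap ℝ E ℝ} {f : E → ℝ} {x₀ : E}
    (hQ : Q.PosDef) (hf : ∀ x, f x = f x₀ + Q (x - x₀)) : StrictConvexOn ℝ Set.univ f := by
  refine ⟨convex_univ, fun x _ y _ hxy a b ha hb hab => ?_⟩
  have hcombo : a • x + b • y - x₀ = a • (x - x₀) + b • (y - x₀) := by
    linear_combination (norm := module) hab • x₀
  have key := Q.map_smul_add_smul_add_mul_map_sub hab (x - x₀) (y - x₀)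
  rw [sub_sub_sub_cancel_right] at key
  have hpos : 0 < a * b * Q (x - y) := mul_pos (mul_pos ha hb) (hQ _ (sub_ne_zero.mpr hxy))
  rw [hf x, hf y, hf (a • x + b • y), hcombo, smul_eq_mul, smul_eq_mul]
  linear_combination hpos + key - f x₀ * hab

end QuadraticMap

section Frobenius

variable {M N R : Type*} [Fintype M] [Fintype N] [CommSemiring R]

def frobeniusBilin : Matrix M N R →ₗ[R] Matrix M N R →ₗ[R] R :=
  LinearMap.mk₂ R (fun X Y => ∑ m, ∑ n, X m n * Y m n)
    (fun X X' Y => by simp only [Matrix.add_apply, add_mul, Finset.sum_add_distrib])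
    (fun c X Y => by simp only [Matrix.smul_apply, smul_eq_mul, Finset.mul_sum, mul_assoc])
    (fun X Y Y' => by simp only [Matrix.add_apply, mul_add, Finset.sum_add_distrib])
    (fun c X Y => by simp only [Matrix.smul_apply, smul_eq_mul, Finset.mul_sum, mul_left_comm])

@[simp]
theorem frobeniusBilin_apply (X Y : Matrix M N R) :
    frobeniusBilin X Y = ∑ m, ∑ n, X m n * Y m n := rfl

theorem frobeniusBilin_comm (X Y : Matrix M N R) : frobeniusBilin X Y = frobeniusBilin Y X := by
  simp only [frobeniusBilin_apply, mul_comm]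

theorem frobeniusBilin_vecMulVec (u : M → R) (v : N → R) (D : Matrix M N R) :
    frobeniusBilin (vecMulVec u v) D = v ⬝ᵥ (Dᵀ *ᵥ u) := by
  simp only [frobeniusBilin_apply, vecMulVec_apply, dotProduct, mulVec, transpose_apply,
    Finset.mul_sum]
  rw [Finset.sum_comm]
  exact Finset.sum_congr rfl fun n _ => Finset.sum_congr rfl fun m _ => by ring

theorem frobeniusBilin_mul_eq_sum (A : Matrix M M R) (D : Matrix M N R) :
    frobeniusBilin D (A * D) = ∑ n, Dᵀ n ⬝ᵥ (A *ᵥ Dᵀ n) := by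
  simp only [frobeniusBilin_apply, mul_apply, dotProduct, mulVec, transpose_apply]
  exact Finset.sum_comm

def frobeniusQuadraticMap (A : Matrix M M R) : QuadraticMap R (Matrix M N R) R :=
  LinearMap.BilinMap.toQuadraticMap (frobeniusBilin.compl₂ (mulLeftLinearMap N R A))

theorem frobeniusQuadraticMap_apply (A : Matrix M M R) (D : Matrix M N R) :
    frobeniusQuadraticMap A D = frobeniusBilin D (A * D) := rfl

theorem Matrix.PosDef.frobeniusQuadraticMap_posDef {A : Matrix M M ℝ} (hA : A.PosDef) :
    (frobeniusQuadraticMap (N := N) A).PosDef := by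
  intro D hD
  obtain ⟨n, hn⟩ : ∃ n, Dᵀ n ≠ 0 := by
    by_contra! h
    exact hD (transpose_eq_zero.mp (funext h))
  rw [frobeniusQuadraticMap_apply, frobeniusBilin_mul_eq_sum]
  refine Finset.sum_pos' (fun k _ => ?_) ⟨n, Finset.mem_univ n, ?_⟩
  · simpa using hA.posSemidef.dotProduct_mulVec_nonneg (Dᵀ k)
  · simpa using hA.dotProduct_mulVec_pos hn

end Frobenius

theorem posDef_one_add_vecMulVec_one {M : Type*} [Fintype M] [DecidableEq M] :
    ((1 : Matrix M M ℝ) + vecMulVec (1 : M → ℝ) 1).PosDef := by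
  simpa using PosDef.one.add_posSemidef (posSemidef_vecMulVec_self_star (1 : M → ℝ))

theorem one_add_vecMulVec_mul {M N R : Type*} [Fintype M] [DecidableEq M] [CommSemiring R]
    (u v : M → R) (X : Matrix M N R) :
    ((1 : Matrix M M R) + vecMulVec u v) * X = X + vecMulVec u (Xᵀ *ᵥ v) := by
  rw [Matrix.add_mul, Matrix.one_mul, vecMulVec_mul, mulVec_transpose]

section WUpdate

variable {M N : Type*} [Fintype M] [Fintype N] (ρ : ℝ) (lam₂ : N → ℝ) (Lam₇ S : Matrix M N ℝ)

noncomputable def wUpdateObjective (W : Matrix M N ℝ) : ℝ :=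
  lam₂ ⬝ᵥ (Wᵀ *ᵥ (1 : M → ℝ) - (1 : N → ℝ))
    + (∑ m : M, ∑ n : N, Lam₇ m n * (W m n - S m n))
    + (ρ / 2) * ((Wᵀ *ᵥ (1 : M → ℝ) - (1 : N → ℝ)) ⬝ᵥ (Wᵀ *ᵥ (1 : M → ℝ) - (1 : N → ℝ)))
    + (ρ / 2) * (∑ m : M, ∑ n : N, (W m n - S m n) ^ 2)

theorem wUpdateObjective_eq_frobeniusBilin (W : Matrix M N ℝ) :
    wUpdateObjective ρ lam₂ Lam₇ S W =
      lam₂ ⬝ᵥ (Wᵀ *ᵥ 1 - 1) + frobeniusBilin Lam₇ (W - S)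
        + ρ / 2 * ((Wᵀ *ᵥ 1 - 1) ⬝ᵥ (Wᵀ *ᵥ 1 - 1)) + ρ / 2 * frobeniusBilin (W - S) (W - S) := by
  simp only [wUpdateObjective, frobeniusBilin_apply, Matrix.sub_apply, sq]

theorem wUpdateObjective_add [DecidableEq M] (X D : Matrix M N ℝ) :
    wUpdateObjective ρ lam₂ Lam₇ S (X + D) = wUpdateObjective ρ lam₂ Lam₇ S X
      + frobeniusBilin (ρ • (((1 : Matrix M M ℝ) + vecMulVec (1 : M → ℝ) 1) * X)
          - (ρ • vecMulVec (1 : M → ℝ) (1 : N → ℝ) + ρ • S - Lam₇ - vecMulVec (1 : M → ℝ) lam₂)) D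
      + ρ / 2 * frobeniusQuadraticMap ((1 : Matrix M M ℝ) + vecMulVec (1 : M → ℝ) 1) D := by
  rw [frobeniusQuadraticMap_apply, wUpdateObjective_eq_frobeniusBilin,
    wUpdateObjective_eq_frobeniusBilin, one_add_vecMulVec_mul, one_add_vecMulVec_mul]
  simp only [map_add, map_sub, map_smul, LinearMap.add_apply, LinearMap.sub_apply,
    LinearMap.smul_apply, frobeniusBilin_vecMulVec, transpose_add, add_mulVec, smul_eq_mul,
    dotProduct_add, add_dotProduct, dotProduct_sub, sub_dotProduct]
  rw [frobeniusBilin_comm D (vecMulVec _ _), frobeniusBilin_vecMulVec, frobeniusBilin_comm D X,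
    frobeniusBilin_comm S D, dotProduct_comm (Dᵀ *ᵥ 1) (Xᵀ *ᵥ 1), dotProduct_comm (Dᵀ *ᵥ 1) 1]
  ring

theorem wUpdateObjective_eq_add_of_stationary [DecidableEq M] {Wstar : Matrix M N ℝ}
    (hstat : ρ • (((1 : Matrix M M ℝ) + vecMulVec (1 : M → ℝ) 1) * Wstar)
      = ρ • vecMulVec (1 : M → ℝ) (1 : N → ℝ) + ρ • S - Lam₇ - vecMulVec (1 : M → ℝ) lam₂)
    (W : Matrix M N ℝ) :
    wUpdateObjective ρ lam₂ Lam₇ S W = wUpdateObjective ρ lam₂ Lam₇ S Wstar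
      + ((ρ / 2) • frobeniusQuadraticMap ((1 : Matrix M M ℝ) + vecMulVec (1 : M → ℝ) 1))
          (W - Wstar) := by
  have h := wUpdateObjective_add ρ lam₂ Lam₇ S Wstar (W - Wstar)
  rw [hstat, sub_self, map_zero, LinearMap.zero_apply, add_zero, add_sub_cancel] at h
  rw [h, _root_.smul_apply, smul_eq_mul]

end WUpdate

/-- The W-update step of the distributed ADMM incentivization algorithm:
`ψ(W) = ⟨λ₂, Wᵀ𝟏 − 𝟏⟩ + ⟨Λ₇, W − S⟩_F + (ρ/2)‖Wᵀ𝟏 − 𝟏‖² + (ρ/2)‖W − S‖²_F` is strictly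
convex, the matrix `I + 𝟏𝟏ᵀ` is positive definite (hence invertible), and the unique global
minimizer is `W* = (1/ρ)(I + 𝟏𝟏ᵀ)⁻¹(ρ𝟏𝟏ᵀ + ρS − Λ₇ − 𝟏λ₂ᵀ)`. -/
theorem W_update_strictConvex_unique_minimizer
    {M N : Type*} [Fintype M] [Fintype N] [DecidableEq M]
    (ρ : ℝ) (hρ : 0 < ρ)
    (lam₂ : N → ℝ) (Lam₇ S : Matrix M N ℝ) :
    ((1 : Matrix M M ℝ) + vecMulVec (1 : M → ℝ) (1 : M → ℝ)).PosDef ∧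
    IsUnit ((1 : Matrix M M ℝ) + vecMulVec (1 : M → ℝ) (1 : M → ℝ)) ∧
    StrictConvexOn ℝ Set.univ (fun W : Matrix M N ℝ =>
      lam₂ ⬝ᵥ (Wᵀ *ᵥ (1 : M → ℝ) - (1 : N → ℝ))
        + (∑ m : M, ∑ n : N, Lam₇ m n * (W m n - S m n))
        + (ρ / 2) * ((Wᵀ *ᵥ (1 : M → ℝ) - (1 : N → ℝ)) ⬝ᵥ (Wᵀ *ᵥ (1 : M → ℝ) - (1 : N → ℝ)))
        + (ρ / 2) * (∑ m : M, ∑ n : N, (W m n - S m n) ^ 2)) ∧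
    (∀ W : Matrix M N ℝ,
      (fun W : Matrix M N ℝ =>
        lam₂ ⬝ᵥ (Wᵀ *ᵥ (1 : M → ℝ) - (1 : N → ℝ))
          + (∑ m : M, ∑ n : N, Lam₇ m n * (W m n - S m n))
          + (ρ / 2) * ((Wᵀ *ᵥ (1 : M → ℝ) - (1 : N → ℝ)) ⬝ᵥ (Wᵀ *ᵥ (1 : M → ℝ) - (1 : N → ℝ)))
          + (ρ / 2) * (∑ m : M, ∑ n : N, (W m n - S m n) ^ 2))
        ((1 / ρ) • (((1 : Matrix M M ℝ) + vecMulVec (1 : M → ℝ) (1 : M → ℝ))⁻¹ *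
          (ρ • vecMulVec (1 : M → ℝ) (1 : N → ℝ) + ρ • S - Lam₇ - vecMulVec (1 : M → ℝ) lam₂)))
      ≤ (fun W : Matrix M N ℝ =>
        lam₂ ⬝ᵥ (Wᵀ *ᵥ (1 : M → ℝ) - (1 : N → ℝ))
          + (∑ m : M, ∑ n : N, Lam₇ m n * (W m n - S m n))
          + (ρ / 2) * ((Wᵀ *ᵥ (1 : M → ℝ) - (1 : N → ℝ)) ⬝ᵥ (Wᵀ *ᵥ (1 : M → ℝ) - (1 : N → ℝ)))
          + (ρ / 2) * (∑ m : M, ∑ n : N, (W m n - S m n) ^ 2)) W) ∧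
    (∀ W : Matrix M N ℝ,
      (∀ V : Matrix M N ℝ,
        (fun W : Matrix M N ℝ =>
          lam₂ ⬝ᵥ (Wᵀ *ᵥ (1 : M → ℝ) - (1 : N → ℝ))
            + (∑ m : M, ∑ n : N, Lam₇ m n * (W m n - S m n))
            + (ρ / 2) * ((Wᵀ *ᵥ (1 : M → ℝ) - (1 : N → ℝ)) ⬝ᵥ (Wᵀ *ᵥ (1 : M → ℝ) - (1 : N → ℝ)))
            + (ρ / 2) * (∑ m : M, ∑ n : N, (W m n - S m n) ^ 2)) W
        ≤ (fun W : Matrix M N ℝ =>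
          lam₂ ⬝ᵥ (Wᵀ *ᵥ (1 : M → ℝ) - (1 : N → ℝ))
            + (∑ m : M, ∑ n : N, Lam₇ m n * (W m n - S m n))
            + (ρ / 2) * ((Wᵀ *ᵥ (1 : M → ℝ) - (1 : N → ℝ)) ⬝ᵥ (Wᵀ *ᵥ (1 : M → ℝ) - (1 : N → ℝ)))
            + (ρ / 2) * (∑ m : M, ∑ n : N, (W m n - S m n) ^ 2)) V) →
      W = (1 / ρ) • (((1 : Matrix M M ℝ) + vecMulVec (1 : M → ℝ) (1 : M → ℝ))⁻¹ *
            (ρ • vecMulVec (1 : M → ℝ) (1 : N → ℝ) + ρ • S - Lam₇ - vecMulVec (1 : M → ℝ) lam₂))) := by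
  set A : Matrix M M ℝ := 1 + vecMulVec 1 1
  set Wstar : Matrix M N ℝ :=
    (1 / ρ) • (A⁻¹ * (ρ • vecMulVec 1 1 + ρ • S - Lam₇ - vecMulVec 1 lam₂))
  set ψ := wUpdateObjective ρ lam₂ Lam₇ S
  have hA : A.PosDef := posDef_one_add_vecMulVec_one
  have hQ : ((ρ / 2) • frobeniusQuadraticMap (N := N) A).PosDef :=
    hA.frobeniusQuadraticMap_posDef.smul (half_pos hρ)
  have hψ : ∀ W, ψ W = ψ Wstar + ((ρ / 2) • frobeniusQuadraticMap A) (W - Wstar) := by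
    refine wUpdateObjective_eq_add_of_stationary ρ lam₂ Lam₇ S ?_
    rw [Matrix.mul_smul, mul_nonsing_inv_cancel_left _ _ ((isUnit_iff_isUnit_det A).mp hA.isUnit),
      smul_smul, mul_one_div_cancel hρ.ne', one_smul]
  refine ⟨hA, hA.isUnit, hQ.strictConvexOn_of_forall_eq_add hψ, fun W => ?_, fun W hW => ?_⟩
  · show ψ Wstar ≤ ψ W
    linarith [hψ W, hQ.nonneg (W - Wstar)]
  · have h : ψ W ≤ ψ Wstar := hW Wstar
    rw [hψ W] at h
    exact sub_eq_zero.mp (hQ.le_zero_iff.mp (by linarith))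
end

section
/- Let ρ > 0, let M, N be finite index sets, and let u ∈ ℝ^{M}, λ₁ ∈ ℝ^{M}, Λ₅, Λ₇, H, W ∈ ℝ^{M×N}. Define χ : ℝ^{M×N} → ℝ by χ(S) = ⟨λ₁, S𝟏 − u⟩ + ⟨Λ₅, H − S⟩_F + ⟨Λ₇, W − S⟩_F + (ρ/2)‖S𝟏 − u‖² + (ρ/2)‖H − S‖²_F + (ρ/2)‖W − S‖²_F, where 𝟏 ∈ ℝ^{N} is the all-ones vector, ⟨·,·⟩_F the Frobenius inner product, and ‖·‖_F the Frobenius norm. Then the matrix 𝟏𝟏ᵀ + 2I ∈ ℝ^{N×N} is positive definite (hence invertible), χ is strictly convex, and its unique global minimizer is S* = (ρ u𝟏ᵀ + Λ₅ + ρH + Λ₇ + ρW − λ₁𝟏ᵀ)(ρ(𝟏𝟏ᵀ + 2I))⁻¹. -/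
/-!
χ is a quadratic function of `S` whose quadratic part is `(ρ/2) tr(S A Sᵀ)` with
`A = 𝟏𝟏ᵀ + 2I`, and its gradient vanishes exactly when `S (ρA) = B`, where
`B = ρ u𝟏ᵀ + Λ₅ + ρH + Λ₇ + ρW − λ₁𝟏ᵀ`; so `S₀ = B (ρA)⁻¹` is its stationary point.
Completing the square row by row gives `χ(S) = χ(S₀) + (ρ/2) tr((S - S₀) A (S - S₀)ᵀ)`.
Since `A` is positive definite, this form is strictly convex and positive off `S = S₀`,
which yields strict convexity of χ and `S₀` as its unique minimizer.
-/

open Matrix Finset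

section RowQuadForm

variable {M N : Type*} [Fintype M] [Fintype N]

def rowQuadForm (A : Matrix N N ℝ) (X : Matrix M N ℝ) : ℝ := ∑ m, X m ⬝ᵥ A *ᵥ X m

theorem rowQuadForm_nonneg {A : Matrix N N ℝ} (hA : A.PosSemidef) (X : Matrix M N ℝ) :
    0 ≤ rowQuadForm A X :=
  sum_nonneg fun m _ => by simpa using hA.dotProduct_mulVec_nonneg (X m)

theorem rowQuadForm_pos {A : Matrix N N ℝ} (hA : A.PosDef) {X : Matrix M N ℝ} (hX : X ≠ 0) :
    0 < rowQuadForm A X := by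
  obtain ⟨m, hm⟩ : ∃ m, X m ≠ 0 := by
    by_contra! h
    exact hX (funext h)
  refine sum_pos' (fun m _ => by simpa using hA.posSemidef.dotProduct_mulVec_nonneg (X m))
    ⟨m, mem_univ m, by simpa using hA.dotProduct_mulVec_pos hm⟩

theorem rowQuadForm_add_smul {A : Matrix N N ℝ} {a b : ℝ} (hab : a + b = 1)
    (X Y : Matrix M N ℝ) :
    rowQuadForm A (a • X + b • Y)
      = a * rowQuadForm A X + b * rowQuadForm A Y - a * b * rowQuadForm A (X - Y) := by
  obtain rfl : b = 1 - a := by linarith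
  simp only [rowQuadForm, mul_sum, ← sum_add_distrib, ← sum_sub_distrib]
  refine sum_congr rfl fun m _ => ?_
  rw [show (a • X + (1 - a) • Y) m = a • X m + (1 - a) • Y m from rfl,
    show (X - Y) m = X m - Y m from rfl]
  simp only [mulVec_add, mulVec_smul, mulVec_sub, dotProduct_add,
    add_dotProduct, dotProduct_smul, smul_dotProduct, dotProduct_sub, sub_dotProduct, smul_eq_mul]
  ring

theorem strictConvexOn_rowQuadForm {A : Matrix N N ℝ} (hA : A.PosDef) :
    StrictConvexOn ℝ Set.univ (rowQuadForm A : Matrix M N ℝ → ℝ) := by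
  refine ⟨convex_univ, fun X _ Y _ hXY a b ha hb hab => ?_⟩
  rw [rowQuadForm_add_smul hab, smul_eq_mul, smul_eq_mul]
  have := mul_pos (mul_pos ha hb) (rowQuadForm_pos hA (sub_ne_zero.2 hXY))
  linarith

end RowQuadForm

section

variable {N : Type*} [Fintype N] [DecidableEq N]

theorem posDef_vecMulVec_self_add_smul_one (v : N → ℝ) {c : ℝ} (hc : 0 < c) :
    (vecMulVec v v + c • (1 : Matrix N N ℝ)).PosDef := by
  simpa using PosDef.posSemidef_add (posSemidef_vecMulVec_self_star v) (PosDef.one.smul hc)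

theorem dotProduct_mulVec_vecMulVec_self_add_smul_one (v x : N → ℝ) (c : ℝ) :
    x ⬝ᵥ (vecMulVec v v + c • (1 : Matrix N N ℝ)) *ᵥ x = (v ⬝ᵥ x) ^ 2 + c * (x ⬝ᵥ x) := by
  simp [add_mulVec, vecMulVec_mulVec, smul_mulVec, dotProduct_comm x v, sq]

theorem mul_vecMulVec_self_add_smul_one {M : Type*} (X : Matrix M N ℝ) (v : N → ℝ) (c : ℝ) :
    X * (vecMulVec v v + c • (1 : Matrix N N ℝ)) = vecMulVec (X *ᵥ v) v + c • X := by
  rw [Matrix.mul_add, mul_vecMulVec, Matrix.mul_smul, Matrix.mul_one]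

end

section

variable {N : Type*} [Fintype N]

noncomputable def rowObjective (ρ a c : ℝ) (L₅ L₇ h w s : N → ℝ) : ℝ :=
  a * (∑ n, s n - c) + ∑ n, L₅ n * (h n - s n) + ∑ n, L₇ n * (w n - s n)
    + ρ / 2 * (∑ n, s n - c) ^ 2 + ρ / 2 * ∑ n, (h n - s n) ^ 2
    + ρ / 2 * ∑ n, (w n - s n) ^ 2

/-- With `t = S₀ m`, `hstat` is row `m` of the stationarity equation `S₀ (ρA) = B`. -/
theorem rowObjective_eq_add {ρ a c : ℝ} {L₅ L₇ h w t : N → ℝ}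
    (hstat : ∀ n, L₅ n + L₇ n + ρ * h n + ρ * w n - a = ρ * (∑ k, t k - c) + 2 * ρ * t n)
    (s : N → ℝ) :
    rowObjective ρ a c L₅ L₇ h w s = rowObjective ρ a c L₅ L₇ h w t
      + ρ / 2 * ((∑ n, (s n - t n)) ^ 2 + 2 * ∑ n, (s n - t n) ^ 2) := by
  have entrywise : ∀ n, L₅ n * (h n - s n) + L₇ n * (w n - s n)
        + ρ / 2 * (h n - s n) ^ 2 + ρ / 2 * (w n - s n) ^ 2
      = L₅ n * (h n - t n) + L₇ n * (w n - t n)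
        + ρ / 2 * (h n - t n) ^ 2 + ρ / 2 * (w n - t n) ^ 2
        + ρ * (s n - t n) ^ 2 - (s n - t n) * (ρ * (∑ k, t k - c) + a) := fun n => by
    linear_combination (t n - s n) * hstat n
  have summed := sum_congr rfl fun n (_ : n ∈ univ) => entrywise n
  simp only [sum_add_distrib, sum_sub_distrib, ← mul_sum, ← sum_mul] at summed
  simp only [rowObjective, sum_sub_distrib]
  linear_combination summed

end

section

variable {M N : Type*} [Fintype M] [Fintype N]

noncomputable def sUpdateObjective (ρ : ℝ) (u lam₁ : M → ℝ) (Lam₅ Lam₇ H W : Matrix M N ℝ)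
    (S : Matrix M N ℝ) : ℝ :=
  lam₁ ⬝ᵥ (S *ᵥ (1 : N → ℝ) - u)
    + (∑ m : M, ∑ n : N, Lam₅ m n * (H m n - S m n))
    + (∑ m : M, ∑ n : N, Lam₇ m n * (W m n - S m n))
    + (ρ / 2) * ((S *ᵥ (1 : N → ℝ) - u) ⬝ᵥ (S *ᵥ (1 : N → ℝ) - u))
    + (ρ / 2) * (∑ m : M, ∑ n : N, (H m n - S m n) ^ 2)
    + (ρ / 2) * (∑ m : M, ∑ n : N, (W m n - S m n) ^ 2)

variable (ρ : ℝ) (u lam₁ : M → ℝ) (Lam₅ Lam₇ H W : Matrix M N ℝ)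

theorem sUpdateObjective_eq_sum_rowObjective (S : Matrix M N ℝ) :
    sUpdateObjective ρ u lam₁ Lam₅ Lam₇ H W S
      = ∑ m, rowObjective ρ (lam₁ m) (u m) (Lam₅ m) (Lam₇ m) (H m) (W m) (S m) := by
  simp only [sUpdateObjective, rowObjective, sum_add_distrib, ← mul_sum, dotProduct, mulVec,
    Pi.sub_apply, Pi.one_apply, mul_one, sq]

theorem sUpdateObjective_eq_add_rowQuadForm [DecidableEq N] {S₀ : Matrix M N ℝ}
    (hS₀ : S₀ * (ρ • (vecMulVec (1 : N → ℝ) 1 + (2 : ℝ) • (1 : Matrix N N ℝ)))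
      = ρ • vecMulVec u 1 + Lam₅ + ρ • H + Lam₇ + ρ • W - vecMulVec lam₁ 1)
    (S : Matrix M N ℝ) :
    sUpdateObjective ρ u lam₁ Lam₅ Lam₇ H W S = sUpdateObjective ρ u lam₁ Lam₅ Lam₇ H W S₀
      + rowQuadForm ((ρ / 2) • (vecMulVec (1 : N → ℝ) 1 + (2 : ℝ) • (1 : Matrix N N ℝ)))
          (S - S₀) := by
  have hrow : ∀ m n, Lam₅ m n + Lam₇ m n + ρ * H m n + ρ * W m n - lam₁ m
      = ρ * (∑ k, S₀ m k - u m) + 2 * ρ * S₀ m n := fun m n => by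
    have := congrFun₂ hS₀ m n
    rw [Matrix.mul_smul, mul_vecMulVec_self_add_smul_one] at this
    simp only [Matrix.smul_apply, Matrix.add_apply, Matrix.sub_apply, vecMulVec_apply, mulVec,
      dotProduct, Pi.one_apply, mul_one, smul_eq_mul] at this
    linear_combination -this
  simp only [sUpdateObjective_eq_sum_rowObjective, rowQuadForm, ← sum_add_distrib]
  refine sum_congr rfl fun m _ => ?_
  rw [rowObjective_eq_add (hrow m), smul_mulVec, dotProduct_smul,
    dotProduct_mulVec_vecMulVec_self_add_smul_one]
  simp only [dotProduct, Pi.one_apply, one_mul, Matrix.sub_apply, smul_eq_mul, sq]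

end

/-- The S-update step of the distributed ADMM incentivization algorithm:
`χ(S) = ⟨λ₁, S𝟏 − u⟩ + ⟨Λ₅, H − S⟩_F + ⟨Λ₇, W − S⟩_F
  + (ρ/2)‖S𝟏 − u‖² + (ρ/2)‖H − S‖²_F + (ρ/2)‖W − S‖²_F`
is strictly convex, the matrix `𝟏𝟏ᵀ + 2I ∈ ℝ^{N×N}` is positive definite (hence invertible),
and the unique global minimizer of `χ` is
`S* = (ρ u𝟏ᵀ + Λ₅ + ρH + Λ₇ + ρW − λ₁𝟏ᵀ)(ρ(𝟏𝟏ᵀ + 2I))⁻¹`. -/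
theorem S_update_strictConvex_unique_minimizer
    {M N : Type*} [Fintype M] [Fintype N] [DecidableEq N]
    (ρ : ℝ) (hρ : 0 < ρ)
    (u lam₁ : M → ℝ) (Lam₅ Lam₇ H W : Matrix M N ℝ) :
    (vecMulVec (1 : N → ℝ) (1 : N → ℝ) + (2 : ℝ) • (1 : Matrix N N ℝ)).PosDef ∧
    IsUnit (vecMulVec (1 : N → ℝ) (1 : N → ℝ) + (2 : ℝ) • (1 : Matrix N N ℝ)) ∧
    StrictConvexOn ℝ Set.univ (fun S : Matrix M N ℝ =>
      lam₁ ⬝ᵥ (S *ᵥ (1 : N → ℝ) - u)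
        + (∑ m : M, ∑ n : N, Lam₅ m n * (H m n - S m n))
        + (∑ m : M, ∑ n : N, Lam₇ m n * (W m n - S m n))
        + (ρ / 2) * ((S *ᵥ (1 : N → ℝ) - u) ⬝ᵥ (S *ᵥ (1 : N → ℝ) - u))
        + (ρ / 2) * (∑ m : M, ∑ n : N, (H m n - S m n) ^ 2)
        + (ρ / 2) * (∑ m : M, ∑ n : N, (W m n - S m n) ^ 2)) ∧
    (∀ S : Matrix M N ℝ,
      (fun S : Matrix M N ℝ =>
        lam₁ ⬝ᵥ (S *ᵥ (1 : N → ℝ) - u)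
          + (∑ m : M, ∑ n : N, Lam₅ m n * (H m n - S m n))
          + (∑ m : M, ∑ n : N, Lam₇ m n * (W m n - S m n))
          + (ρ / 2) * ((S *ᵥ (1 : N → ℝ) - u) ⬝ᵥ (S *ᵥ (1 : N → ℝ) - u))
          + (ρ / 2) * (∑ m : M, ∑ n : N, (H m n - S m n) ^ 2)
          + (ρ / 2) * (∑ m : M, ∑ n : N, (W m n - S m n) ^ 2))
        ((ρ • vecMulVec u (1 : N → ℝ) + Lam₅ + ρ • H + Lam₇ + ρ • W
            - vecMulVec lam₁ (1 : N → ℝ)) *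
          (ρ • (vecMulVec (1 : N → ℝ) (1 : N → ℝ) + (2 : ℝ) • (1 : Matrix N N ℝ)))⁻¹)
      ≤ (fun S : Matrix M N ℝ =>
        lam₁ ⬝ᵥ (S *ᵥ (1 : N → ℝ) - u)
          + (∑ m : M, ∑ n : N, Lam₅ m n * (H m n - S m n))
          + (∑ m : M, ∑ n : N, Lam₇ m n * (W m n - S m n))
          + (ρ / 2) * ((S *ᵥ (1 : N → ℝ) - u) ⬝ᵥ (S *ᵥ (1 : N → ℝ) - u))
          + (ρ / 2) * (∑ m : M, ∑ n : N, (H m n - S m n) ^ 2)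
          + (ρ / 2) * (∑ m : M, ∑ n : N, (W m n - S m n) ^ 2)) S) ∧
    (∀ S : Matrix M N ℝ,
      (∀ V : Matrix M N ℝ,
        (fun S : Matrix M N ℝ =>
          lam₁ ⬝ᵥ (S *ᵥ (1 : N → ℝ) - u)
            + (∑ m : M, ∑ n : N, Lam₅ m n * (H m n - S m n))
            + (∑ m : M, ∑ n : N, Lam₇ m n * (W m n - S m n))
            + (ρ / 2) * ((S *ᵥ (1 : N → ℝ) - u) ⬝ᵥ (S *ᵥ (1 : N → ℝ) - u))
            + (ρ / 2) * (∑ m : M, ∑ n : N, (H m n - S m n) ^ 2)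
            + (ρ / 2) * (∑ m : M, ∑ n : N, (W m n - S m n) ^ 2)) S
        ≤ (fun S : Matrix M N ℝ =>
          lam₁ ⬝ᵥ (S *ᵥ (1 : N → ℝ) - u)
            + (∑ m : M, ∑ n : N, Lam₅ m n * (H m n - S m n))
            + (∑ m : M, ∑ n : N, Lam₇ m n * (W m n - S m n))
            + (ρ / 2) * ((S *ᵥ (1 : N → ℝ) - u) ⬝ᵥ (S *ᵥ (1 : N → ℝ) - u))
            + (ρ / 2) * (∑ m : M, ∑ n : N, (H m n - S m n) ^ 2)
            + (ρ / 2) * (∑ m : M, ∑ n : N, (W m n - S m n) ^ 2)) V) →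
      S = (ρ • vecMulVec u (1 : N → ℝ) + Lam₅ + ρ • H + Lam₇ + ρ • W
            - vecMulVec lam₁ (1 : N → ℝ)) *
          (ρ • (vecMulVec (1 : N → ℝ) (1 : N → ℝ) + (2 : ℝ) • (1 : Matrix N N ℝ)))⁻¹) := by
  set A : Matrix N N ℝ := vecMulVec (1 : N → ℝ) 1 + (2 : ℝ) • (1 : Matrix N N ℝ)
  set S₀ : Matrix M N ℝ := (ρ • vecMulVec u (1 : N → ℝ) + Lam₅ + ρ • H + Lam₇ + ρ • W
    - vecMulVec lam₁ (1 : N → ℝ)) * (ρ • A)⁻¹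
  set χ := sUpdateObjective ρ u lam₁ Lam₅ Lam₇ H W
  show A.PosDef ∧ IsUnit A ∧ StrictConvexOn ℝ Set.univ χ ∧ (∀ S, χ S₀ ≤ χ S) ∧
    ∀ S, (∀ V, χ S ≤ χ V) → S = S₀
  have hA : A.PosDef := posDef_vecMulVec_self_add_smul_one 1 two_pos
  have hA' : ((ρ / 2) • A).PosDef := hA.smul (half_pos hρ)
  have hχ : ∀ S, χ S = χ S₀ + rowQuadForm ((ρ / 2) • A) (S - S₀) :=
    sUpdateObjective_eq_add_rowQuadForm ρ u lam₁ Lam₅ Lam₇ H W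
      (nonsing_inv_mul_cancel_right _ _ ((isUnit_iff_isUnit_det _).1 (hA.smul hρ).isUnit))
  refine ⟨hA, hA.isUnit, ?_, fun S => ?_, fun S hS => ?_⟩
  · have hconv := ((strictConvexOn_rowQuadForm hA').translate_left (-S₀)).add_const (χ S₀)
    simp only [Set.preimage_univ, ← sub_eq_add_neg] at hconv
    exact hconv.congr fun S _ => by simp [hχ S, add_comm]
  · rw [hχ S]
    exact le_add_of_nonneg_right (rowQuadForm_nonneg hA'.posSemidef _)
  · by_contra hne
    have hle : χ S ≤ χ S₀ := hS S₀
    rw [hχ S] at hle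
    linarith [rowQuadForm_pos hA' (sub_ne_zero.2 hne)]
end
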